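/- Let f, g, h be smooth periodic functions on Ω = M × (-1,1) with M = (0,L₁)×(0,L₂). Then ∫_M (∫_{-1}^1 f dz)(∫_{-1}^1 g h dz) dxdy ≤ C ‖f‖_{L²(Ω)}^{1/2} (‖f‖_{L²(Ω)}^{1/2} + ‖∇_H f‖_{L²(Ω)}^{1/2}) ‖g‖_{L²(Ω)} ‖h‖_{L²(Ω)}^{1/2} (‖h‖_{L²(Ω)}^{1/2} + ‖∇_H h‖_{L²(Ω)}^{1/2}), where C depends only on L₁, L₂ and ∇_H = (∂_x, ∂_y). -/

import Mathlib

open MeasureTheory Real Set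

noncomputable section

abbrev Pt := ℝ × ℝ × ℝ

/-- partial derivative in `x`. -/
def pdx (f : Pt → ℝ) (p : Pt) : ℝ := deriv (fun t => f (t, p.2.1, p.2.2)) p.1
/-- partial derivative in `y`. -/
def pdy (f : Pt → ℝ) (p : Pt) : ℝ := deriv (fun t => f (p.1, t, p.2.2)) p.2.1
/-- partial derivative in `z`. -/
def pdz (f : Pt → ℝ) (p : Pt) : ℝ := deriv (fun t => f (p.1, p.2.1, t)) p.2.2

/-- full Laplacian. -/
def lap (f : Pt → ℝ) : Pt → ℝ := fun p => pdx (pdx f) p + pdy (pdy f) p + pdz (pdz f) p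
/-- horizontal Laplacian. -/
def lapH (f : Pt → ℝ) : Pt → ℝ := fun p => pdx (pdx f) p + pdy (pdy f) p

/-- squared full gradient. -/
def gradSq (f : Pt → ℝ) (p : Pt) : ℝ := (pdx f p)^2 + (pdy f p)^2 + (pdz f p)^2
/-- squared horizontal gradient. -/
def gradHSq (f : Pt → ℝ) (p : Pt) : ℝ := (pdx f p)^2 + (pdy f p)^2

/-- the horizontal domain `M = (0,L₁) × (0,L₂)`. -/
def MSet (L1 L2 : ℝ) : Set (ℝ × ℝ) := Ioo 0 L1 ×ˢ Ioo 0 L2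
/-- the domain `Ω = M × (-1,1)`. -/
def OmegaSet (L1 L2 : ℝ) : Set Pt := Ioo 0 L1 ×ˢ (Ioo 0 L2 ×ˢ Ioo (-1 : ℝ) 1)

/-- integral over `Ω`. -/
def intOn (L1 L2 : ℝ) (G : Pt → ℝ) : ℝ := ∫ p in OmegaSet L1 L2, G p

/-- periodicity in `x`, `y`, `z` with periods `L₁`, `L₂`, `2`. -/
def Periodic3 (L1 L2 : ℝ) (f : Pt → ℝ) : Prop :=
  (∀ p : Pt, f (p.1 + L1, p.2.1, p.2.2) = f p) ∧
  (∀ p : Pt, f (p.1, p.2.1 + L2, p.2.2) = f p) ∧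
  (∀ p : Pt, f (p.1, p.2.1, p.2.2 + 2) = f p)

/-- squared `L²(Ω)` norm. -/
def L2sq (L1 L2 : ℝ) (F : Pt → ℝ) : ℝ := intOn L1 L2 (fun p => (F p)^2)
/-- `L²(Ω)` norm. -/
def L2n (L1 L2 : ℝ) (F : Pt → ℝ) : ℝ := Real.sqrt (L2sq L1 L2 F)
/-- `L²(Ω)` norm of the horizontal gradient. -/
def L2gradH (L1 L2 : ℝ) (F : Pt → ℝ) : ℝ := Real.sqrt (intOn L1 L2 (gradHSq F))
/-- `L²(Ω)` norm of the full gradient. -/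
def L2grad (L1 L2 : ℝ) (F : Pt → ℝ) : ℝ := Real.sqrt (intOn L1 L2 (gradSq F))

/-- first component of a horizontal vector field. -/
def c1 (v : Pt → ℝ × ℝ) : Pt → ℝ := fun p => (v p).1
/-- second component of a horizontal vector field. -/
def c2 (v : Pt → ℝ × ℝ) : Pt → ℝ := fun p => (v p).2

/-- horizontal divergence. -/
def divH (v : Pt → ℝ × ℝ) : Pt → ℝ := fun p => pdx (c1 v) p + pdy (c2 v) p

/-- squared `L²(Ω)` norm of a horizontal vector field. -/
def vL2sq (L1 L2 : ℝ) (v : Pt → ℝ × ℝ) : ℝ := L2sq L1 L2 (c1 v) + L2sq L1 L2 (c2 v)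
def vL2n (L1 L2 : ℝ) (v : Pt → ℝ × ℝ) : ℝ := Real.sqrt (vL2sq L1 L2 v)
/-- squared `L²(Ω)` norm of the full gradient of a horizontal vector field. -/
def vGradSq (L1 L2 : ℝ) (v : Pt → ℝ × ℝ) : ℝ :=
  intOn L1 L2 (fun p => gradSq (c1 v) p + gradSq (c2 v) p)
def vGradn (L1 L2 : ℝ) (v : Pt → ℝ × ℝ) : ℝ := Real.sqrt (vGradSq L1 L2 v)
/-- squared `L²(Ω)` norm of the Laplacian of a horizontal vector field. -/
def vLapSq (L1 L2 : ℝ) (v : Pt → ℝ × ℝ) : ℝ :=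
  intOn L1 L2 (fun p => (lap (c1 v) p)^2 + (lap (c2 v) p)^2)
def vLapn (L1 L2 : ℝ) (v : Pt → ℝ × ℝ) : ℝ := Real.sqrt (vLapSq L1 L2 v)
/-- periodicity of a horizontal vector field. -/
def vPeriodic (L1 L2 : ℝ) (v : Pt → ℝ × ℝ) : Prop :=
  Periodic3 L1 L2 (c1 v) ∧ Periodic3 L1 L2 (c2 v)

/-! ### Auxiliary material for the proof -/

set_option linter.unusedSectionVars false
set_option maxHeartbeats 1000000

section helpers
variable {α : Type*} [TopologicalSpace α] [MeasureSpace α] [OpensMeasurableSpace α]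
  [T2Space α] [IsFiniteMeasureOnCompacts (volume : Measure α)] [SecondCountableTopology α]

lemma intg {s K : Set α} (hK : IsCompact K) (hsK : s ⊆ K) {u : α → ℝ} (hu : Continuous u) :
    IntegrableOn u s volume :=
  (hu.continuousOn.integrableOn_compact hK).mono_set hsK

lemma meml2 {s K : Set α} (hK : IsCompact K) (hsK : s ⊆ K) (hs : MeasurableSet s)
    {u : α → ℝ} (hu : Continuous u) : MemLp u 2 (volume.restrict s) := by
  have fin : IsFiniteMeasure (volume.restrict s) :=
    ⟨by rw [Measure.restrict_apply_univ]
        exact lt_of_le_of_lt (measure_mono hsK) hK.measure_lt_top⟩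
  obtain ⟨C, hC⟩ := hK.exists_bound_of_continuousOn hu.continuousOn
  refine MemLp.of_bound hu.aestronglyMeasurable C ?_
  rw [ae_restrict_iff' hs]
  exact ae_of_all _ fun x hx => hC x (hsK hx)

/-- Cauchy–Schwarz for set integrals of continuous functions on bounded sets. -/
lemma cs2 {s K : Set α} (hK : IsCompact K) (hsK : s ⊆ K) (hs : MeasurableSet s)
    {u v : α → ℝ} (hu : Continuous u) (hv : Continuous v) :
    ∫ x in s, u x * v x ≤
      Real.sqrt (∫ x in s, (u x)^2) * Real.sqrt (∫ x in s, (v x)^2) := by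
  have h1 : ∫ x in s, u x * v x ≤ ∫ x in s, |u x| * |v x| := by
    refine setIntegral_mono (intg hK hsK (hu.mul hv)) (intg hK hsK (hu.abs.mul hv.abs)) ?_
    intro x
    calc u x * v x ≤ |u x * v x| := le_abs_self _
    _ = |u x| * |v x| := abs_mul _ _
  have hconj : Real.HolderConjugate 2 2 := by constructor <;> norm_num
  have h2 := integral_mul_le_Lp_mul_Lq_of_nonneg (μ := volume.restrict s) hconj
    (f := fun x => |u x|) (g := fun x => |v x|)
    (ae_of_all _ fun x => abs_nonneg _) (ae_of_all _ fun x => abs_nonneg _)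
    (by rw [show ENNReal.ofReal (2:ℝ) = 2 by norm_num]; exact meml2 hK hsK hs hu.abs)
    (by rw [show ENNReal.ofReal (2:ℝ) = 2 by norm_num]; exact meml2 hK hsK hs hv.abs)
  refine h1.trans (h2.trans_eq ?_)
  have e : ∀ w : α → ℝ, (∫ x in s, |w x| ^ (2:ℝ)) = ∫ x in s, (w x)^2 := by
    intro w; refine setIntegral_congr_fun hs fun x _ => ?_
    rw [show ((2:ℝ)) = ((2:ℕ):ℝ) by norm_num, Real.rpow_natCast, sq_abs]
  rw [e u, e v, ← Real.sqrt_eq_rpow, ← Real.sqrt_eq_rpow]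

end helpers

lemma sqrt_add_le' {a b : ℝ} (ha : 0 ≤ a) (hb : 0 ≤ b) :
    Real.sqrt (a + b) ≤ Real.sqrt a + Real.sqrt b := by
  have h : a + b ≤ (Real.sqrt a + Real.sqrt b)^2 := by
    nlinarith [Real.sq_sqrt ha, Real.sq_sqrt hb,
      mul_nonneg (Real.sqrt_nonneg a) (Real.sqrt_nonneg b)]
  calc Real.sqrt (a + b) ≤ Real.sqrt ((Real.sqrt a + Real.sqrt b)^2) := Real.sqrt_le_sqrt h
    _ = Real.sqrt a + Real.sqrt b :=
        Real.sqrt_sq (by positivity)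

lemma ii_eq {a b : ℝ} (hab : a ≤ b) (u : ℝ → ℝ) :
    ∫ t in a..b, u t = ∫ t in Ioo a b, u t := by
  rw [intervalIntegral.integral_of_le hab, integral_Ioc_eq_integral_Ioo]

lemma contParam {X : Type*} [TopologicalSpace X] {k : X → ℝ → ℝ}
    (hk : Continuous (Function.uncurry k)) (a b : ℝ) :
    Continuous fun x => ∫ t in a..b, k x t :=
  intervalIntegral.continuous_parametric_intervalIntegral_of_continuous' hk a b

lemma swap2 {a b c d : ℝ} {Φ : ℝ × ℝ → ℝ} (hΦ : Continuous Φ) :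
    ∫ x in Ioo a b, ∫ y in Ioo c d, Φ (x, y) = ∫ y in Ioo c d, ∫ x in Ioo a b, Φ (x, y) := by
  have hint : Integrable (Function.uncurry fun x y => Φ (x, y))
      ((volume.restrict (Ioo a b)).prod (volume.restrict (Ioo c d))) := by
    rw [Measure.prod_restrict, ← Measure.volume_eq_prod]
    exact intg (K := Icc a b ×ˢ Icc c d) (isCompact_Icc.prod isCompact_Icc)
      (prod_mono Ioo_subset_Icc_self Ioo_subset_Icc_self) (by exact hΦ)
  exact integral_integral_swap hint

lemma prod_eq_iter {β : Type*} [MeasureSpace β] [TopologicalSpace β] [BorelSpace β]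
    [T2Space β] [SecondCountableTopology β] [IsFiniteMeasureOnCompacts (volume : Measure β)]
    [SFinite (volume : Measure β)]
    {a b : ℝ} {t : Set β} {Kb : Set β} (hKb : IsCompact Kb) (htKb : t ⊆ Kb)
    {Φ : ℝ × β → ℝ} (hΦ : Continuous Φ) :
    ∫ q in Ioo a b ×ˢ t, Φ q = ∫ x in Ioo a b, ∫ w in t, Φ (x, w) := by
  rw [show (volume : Measure (ℝ × β)).restrict (Ioo a b ×ˢ t)
      = ((volume.restrict (Ioo a b)).prod (volume.restrict t)) from by
    rw [Measure.prod_restrict, ← Measure.volume_eq_prod]]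
  exact integral_prod _ (by
    rw [Measure.prod_restrict, ← Measure.volume_eq_prod]
    exact intg (K := Icc a b ×ˢ Kb) (isCompact_Icc.prod hKb)
      (prod_mono Ioo_subset_Icc_self htKb) hΦ)

/-- averaged FTC bound. -/
lemma avg_bound {L : ℝ} (hL : 0 < L) {φ φ' : ℝ → ℝ}
    (hd : ∀ t, HasDerivAt φ (φ' t) t) (hc : Continuous φ')
    {x : ℝ} (hx : x ∈ Icc 0 L) :
    φ x ≤ (1/L) * (∫ s in (0:ℝ)..L, φ s) + ∫ s in (0:ℝ)..L, |φ' s| := by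
  have hφc : Continuous φ := by
    rw [continuous_iff_continuousAt]; exact fun t => (hd t).continuousAt
  have key : ∀ s ∈ Icc (0:ℝ) L, φ x ≤ φ s + ∫ t in (0:ℝ)..L, |φ' t| := by
    intro s hs
    have ftc : ∫ t in s..x, φ' t = φ x - φ s :=
      intervalIntegral.integral_eq_sub_of_hasDerivAt (fun t _ => hd t)
        (hc.intervalIntegrable s x)
    have habs : ∫ t in s..x, φ' t ≤ ∫ t in (0:ℝ)..L, |φ' t| := by
      rcases le_total s x with hsx | hxs
      · calc ∫ t in s..x, φ' t ≤ ∫ t in s..x, |φ' t| :=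
              intervalIntegral.integral_mono_on hsx (hc.intervalIntegrable s x)
                (hc.abs.intervalIntegrable s x) (fun t _ => le_abs_self _)
          _ ≤ ∫ t in (0:ℝ)..L, |φ' t| :=
              intervalIntegral.integral_mono_interval hs.1 hsx hx.2
                (ae_of_all _ fun t => abs_nonneg _) (hc.abs.intervalIntegrable 0 L)
      · calc ∫ t in s..x, φ' t = -∫ t in x..s, φ' t := (intervalIntegral.integral_symm x s)
          _ ≤ ∫ t in x..s, |φ' t| := by
              rw [show -∫ t in x..s, φ' t = ∫ t in x..s, -φ' t by
                rw [intervalIntegral.integral_neg]]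
              exact intervalIntegral.integral_mono_on hxs ((hc.neg).intervalIntegrable x s)
                (hc.abs.intervalIntegrable x s) (fun t _ => neg_le_abs _)
          _ ≤ ∫ t in (0:ℝ)..L, |φ' t| :=
              intervalIntegral.integral_mono_interval hx.1 hxs hs.2
                (ae_of_all _ fun t => abs_nonneg _) (hc.abs.intervalIntegrable 0 L)
    linarith [ftc ▸ habs]
  have hint : ∫ s in (0:ℝ)..L, φ x ≤ ∫ s in (0:ℝ)..L, (φ s + ∫ t in (0:ℝ)..L, |φ' t|) :=
    intervalIntegral.integral_mono_on hL.le (intervalIntegrable_const)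
      ((hφc.intervalIntegrable 0 L).add intervalIntegrable_const) key
  rw [intervalIntegral.integral_const, intervalIntegral.integral_add
      (hφc.intervalIntegrable 0 L) intervalIntegrable_const,
    intervalIntegral.integral_const] at hint
  simp only [smul_eq_mul, sub_zero] at hint
  have hK : 0 ≤ ∫ t in (0:ℝ)..L, |φ' t| :=
    intervalIntegral.integral_nonneg hL.le (fun t _ => abs_nonneg _)
  have h3 : φ x ≤ ((∫ s in (0:ℝ)..L, φ s) + L * ∫ t in (0:ℝ)..L, |φ' t|) / L := by
    rw [le_div_iff₀ hL]; linarith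
  have hfin : ((∫ s in (0:ℝ)..L, φ s) + L * ∫ t in (0:ℝ)..L, |φ' t|) / L
      = (1/L) * (∫ s in (0:ℝ)..L, φ s) + ∫ t in (0:ℝ)..L, |φ' t| := by
    field_simp
  exact h3.trans_eq hfin

lemma pdx_eq {f : Pt → ℝ} (hf : ContDiff ℝ (⊤ : ℕ∞) f) (p : Pt) :
    pdx f p = fderiv ℝ f p (1, 0, 0) := by
  have h := ((hf.differentiable (by simp)) p).hasFDerivAt.comp_hasDerivAt p.1
    ((hasDerivAt_id p.1).prodMk ((hasDerivAt_const p.1 p.2.1).prodMk (hasDerivAt_const p.1 p.2.2)))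
  simpa [pdx, Function.comp_def] using h.deriv

lemma pdy_eq {f : Pt → ℝ} (hf : ContDiff ℝ (⊤ : ℕ∞) f) (p : Pt) :
    pdy f p = fderiv ℝ f p (0, 1, 0) := by
  have h := ((hf.differentiable (by simp)) p).hasFDerivAt.comp_hasDerivAt p.2.1
    ((hasDerivAt_const p.2.1 p.1).prodMk ((hasDerivAt_id p.2.1).prodMk (hasDerivAt_const p.2.1 p.2.2)))
  simpa [pdy, Function.comp_def] using h.deriv

lemma hasDerivAt_pdx {f : Pt → ℝ} (hf : ContDiff ℝ (⊤ : ℕ∞) f) (x y z : ℝ) :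
    HasDerivAt (fun t => f (t, y, z)) (pdx f (x, y, z)) x := by
  have h := ((hf.differentiable (by simp)) ((x,y,z) : Pt)).hasFDerivAt.comp_hasDerivAt x
    ((hasDerivAt_id x).prodMk ((hasDerivAt_const x y).prodMk (hasDerivAt_const x z)))
  rw [pdx_eq hf]; simpa [Function.comp_def] using h

lemma hasDerivAt_pdy {f : Pt → ℝ} (hf : ContDiff ℝ (⊤ : ℕ∞) f) (x y z : ℝ) :
    HasDerivAt (fun t => f (x, t, z)) (pdy f (x, y, z)) y := by
  have h := ((hf.differentiable (by simp)) ((x,y,z) : Pt)).hasFDerivAt.comp_hasDerivAt y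
    ((hasDerivAt_const y x).prodMk ((hasDerivAt_id y).prodMk (hasDerivAt_const y z)))
  rw [pdy_eq hf]; simpa [Function.comp_def] using h

lemma cont_pdx {f : Pt → ℝ} (hf : ContDiff ℝ (⊤ : ℕ∞) f) : Continuous (pdx f) := by
  have e : pdx f = fun p : Pt => fderiv ℝ f p (1,0,0) := funext fun p => pdx_eq hf p
  rw [e]; exact (hf.continuous_fderiv (by simp)).clm_apply continuous_const

lemma cont_pdy {f : Pt → ℝ} (hf : ContDiff ℝ (⊤ : ℕ∞) f) : Continuous (pdy f) := by
  have e : pdy f = fun p : Pt => fderiv ℝ f p (0,1,0) := funext fun p => pdy_eq hf p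
  rw [e]; exact (hf.continuous_fderiv (by simp)).clm_apply continuous_const

/-- the vertical average. -/
def zInt (k : Pt → ℝ) (q : ℝ × ℝ) : ℝ := ∫ z in (-1:ℝ)..1, k (q.1, q.2, z)

/-- `L²` norm in `z`. -/
def Qz (k : Pt → ℝ) (q : ℝ × ℝ) : ℝ := Real.sqrt (∫ z in (-1:ℝ)..1, (k (q.1, q.2, z))^2)

lemma cont_zInt {k : Pt → ℝ} (hk : Continuous k) : Continuous (zInt k) := by
  have hc : Continuous (Function.uncurry fun (q : ℝ × ℝ) (z : ℝ) => k (q.1, q.2, z)) :=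
    hk.comp ((continuous_fst.comp continuous_fst).prodMk
      ((continuous_snd.comp continuous_fst).prodMk continuous_snd))
  exact contParam hc (-1) 1

lemma cont_Qz {k : Pt → ℝ} (hk : Continuous k) : Continuous (Qz k) :=
  Real.continuous_sqrt.comp (cont_zInt (k := fun p => (k p)^2) (hk.pow 2))

lemma zInt_sq_nonneg (k : Pt → ℝ) (q : ℝ × ℝ) : 0 ≤ zInt (fun p => (k p)^2) q :=
  intervalIntegral.integral_nonneg (by norm_num) (fun _ _ => sq_nonneg _)

lemma Qz_nonneg (k : Pt → ℝ) (q : ℝ × ℝ) : 0 ≤ Qz k q := Real.sqrt_nonneg _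

lemma Qz_sq {k : Pt → ℝ} (q : ℝ × ℝ) :
    (Qz k q)^2 = zInt (fun p => (k p)^2) q :=
  Real.sq_sqrt (zInt_sq_nonneg k q)

lemma abs_zInt_le {k : Pt → ℝ} (hk : Continuous k) (q : ℝ × ℝ) :
    |zInt k q| ≤ Real.sqrt 2 * Qz k q := by
  have h1 : |zInt k q| ≤ ∫ z in (-1:ℝ)..1, |k (q.1, q.2, z)| :=
    intervalIntegral.abs_integral_le_integral_abs (by norm_num)
  have h2 : ∫ z in (-1:ℝ)..1, |k (q.1, q.2, z)| = ∫ z in Ioo (-1:ℝ) 1, |k (q.1, q.2, z)| * 1 := by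
    rw [ii_eq (by norm_num : (-1:ℝ) ≤ 1)]; simp
  have h3 := cs2 (α := ℝ) (K := Icc (-1:ℝ) 1) isCompact_Icc Ioo_subset_Icc_self
    measurableSet_Ioo (u := fun z => |k (q.1, q.2, z)|) (v := fun _ => (1:ℝ))
    ((hk.comp (by continuity)).abs) continuous_const
  have h4 : (∫ z in Ioo (-1:ℝ) 1, (|k (q.1, q.2, z)|)^2) = ∫ z in Ioo (-1:ℝ) 1, (k (q.1, q.2, z))^2 := by
    refine setIntegral_congr_fun measurableSet_Ioo fun z _ => sq_abs _
  have h5 : (∫ z in Ioo (-1:ℝ) 1, ((1:ℝ))^2) = 2 := by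
    simp [Real.volume_Ioo]
    norm_num
  rw [h4, h5] at h3
  have h6 : Qz k q = Real.sqrt (∫ z in Ioo (-1:ℝ) 1, (k (q.1, q.2, z))^2) := by
    rw [Qz, ii_eq (by norm_num : (-1:ℝ) ≤ 1)]
  calc |zInt k q| ≤ ∫ z in Ioo (-1:ℝ) 1, |k (q.1, q.2, z)| * 1 := h2 ▸ h1
    _ ≤ Real.sqrt (∫ z in Ioo (-1:ℝ) 1, (k (q.1, q.2, z))^2) * Real.sqrt 2 := h3
    _ = Real.sqrt 2 * Qz k q := by rw [h6]; ring

lemma abs_zInt_mul_le {g h : Pt → ℝ} (hg : Continuous g) (hh : Continuous h) (q : ℝ × ℝ) :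
    |zInt (fun p => g p * h p) q| ≤ Qz g q * Qz h q := by
  have h1 : |zInt (fun p => g p * h p) q| ≤ ∫ z in (-1:ℝ)..1, |g (q.1, q.2, z) * h (q.1, q.2, z)| :=
    intervalIntegral.abs_integral_le_integral_abs (by norm_num)
  have h2 : ∫ z in (-1:ℝ)..1, |g (q.1, q.2, z) * h (q.1, q.2, z)|
      = ∫ z in Ioo (-1:ℝ) 1, |g (q.1, q.2, z)| * |h (q.1, q.2, z)| := by
    rw [ii_eq (by norm_num : (-1:ℝ) ≤ 1)]
    exact setIntegral_congr_fun measurableSet_Ioo fun z _ => abs_mul _ _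
  have h3 := cs2 (α := ℝ) (K := Icc (-1:ℝ) 1) isCompact_Icc Ioo_subset_Icc_self
    measurableSet_Ioo (u := fun z => |g (q.1, q.2, z)|) (v := fun z => |h (q.1, q.2, z)|)
    ((hg.comp (by continuity)).abs) ((hh.comp (by continuity)).abs)
  have e : ∀ (w : Pt → ℝ), (∫ z in Ioo (-1:ℝ) 1, (|w (q.1, q.2, z)|)^2)
      = ∫ z in Ioo (-1:ℝ) 1, (w (q.1, q.2, z))^2 := fun w =>
    setIntegral_congr_fun measurableSet_Ioo fun z _ => sq_abs _
  rw [e g, e h] at h3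
  have h6 : ∀ (w : Pt → ℝ), Qz w q = Real.sqrt (∫ z in Ioo (-1:ℝ) 1, (w (q.1, q.2, z))^2) :=
    fun w => by rw [Qz, ii_eq (by norm_num : (-1:ℝ) ≤ 1)]
  rw [h6 g, h6 h]
  exact (h2 ▸ h1).trans h3

lemma hasDerivAt_F {f : Pt → ℝ} (hf : ContDiff ℝ (⊤ : ℕ∞) f) (y x₀ : ℝ) :
    HasDerivAt (fun x => zInt f (x, y)) (zInt (pdx f) (x₀, y)) x₀ := by
  have hcf : Continuous f := hf.continuous
  have hcp : Continuous (pdx f) := cont_pdx hf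
  have hK : IsCompact ((Icc (x₀-1) (x₀+1) ×ˢ (Icc y y ×ˢ Icc (-1:ℝ) 1)) : Set Pt) :=
    isCompact_Icc.prod (isCompact_Icc.prod isCompact_Icc)
  obtain ⟨C, hC⟩ := hK.exists_bound_of_continuousOn hcp.continuousOn
  refine (intervalIntegral.hasDerivAt_integral_of_dominated_loc_of_deriv_le
    (F := fun x z => f (x, y, z)) (F' := fun x z => pdx f (x, y, z))
    (bound := fun _ => C) (Metric.ball_mem_nhds x₀ zero_lt_one) ?_ ?_ ?_ ?_ ?_ ?_).2
  · exact Filter.Eventually.of_forall fun x =>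
      (hcf.comp (by continuity : Continuous fun z : ℝ => ((x, y, z) : Pt))).aestronglyMeasurable
  · exact (hcf.comp (by continuity : Continuous fun z : ℝ => ((x₀, y, z) : Pt))).intervalIntegrable _ _
  · exact (hcp.comp (by continuity : Continuous fun z : ℝ => ((x₀, y, z) : Pt))).aestronglyMeasurable
  · refine ae_of_all _ fun t ht x hx => ?_
    have ht' : t ∈ Ioc (-1:ℝ) 1 := by
      rwa [Set.uIoc_of_le (by norm_num : (-1:ℝ) ≤ 1)] at ht
    have hx' := Metric.mem_ball.1 hx
    rw [Real.dist_eq] at hx'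
    have hx'' := abs_lt.1 hx'
    exact hC (x, y, t) ⟨⟨by linarith, by linarith⟩, ⟨le_refl y, le_refl y⟩,
      ⟨ht'.1.le, ht'.2⟩⟩
  · exact intervalIntegrable_const
  · exact ae_of_all _ fun t _ x _ => hasDerivAt_pdx hf x y t

lemma intOn_eq {L1 L2 : ℝ} {G : Pt → ℝ} (hG : Continuous G) :
    intOn L1 L2 G = ∫ x in Ioo 0 L1, ∫ y in Ioo 0 L2, ∫ z in Ioo (-1:ℝ) 1, G (x, y, z) := by
  rw [intOn, OmegaSet,
    prod_eq_iter (Kb := Icc 0 L2 ×ˢ Icc (-1:ℝ) 1) (isCompact_Icc.prod isCompact_Icc)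
      (prod_mono Ioo_subset_Icc_self Ioo_subset_Icc_self) hG]
  refine setIntegral_congr_fun measurableSet_Ioo fun x _ => ?_
  exact prod_eq_iter (Kb := Icc (-1:ℝ) 1) isCompact_Icc Ioo_subset_Icc_self
    (hG.comp (by continuity : Continuous fun w : ℝ × ℝ => ((x, w.1, w.2) : Pt)))

lemma mset_eq {L1 L2 : ℝ} {Φ : ℝ × ℝ → ℝ} (hΦ : Continuous Φ) :
    ∫ q in MSet L1 L2, Φ q = ∫ x in Ioo 0 L1, ∫ y in Ioo 0 L2, Φ (x, y) := by
  rw [MSet]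
  exact prod_eq_iter (Kb := Icc 0 L2) isCompact_Icc Ioo_subset_Icc_self hΦ

lemma intgIoo {a b : ℝ} {u : ℝ → ℝ} (hu : Continuous u) : IntegrableOn u (Ioo a b) volume :=
  intg isCompact_Icc Ioo_subset_Icc_self hu

lemma sq_zInt_le {k : Pt → ℝ} (hk : Continuous k) (q : ℝ × ℝ) :
    (zInt k q)^2 ≤ 2 * zInt (fun p => (k p)^2) q := by
  have h := abs_zInt_le hk q
  have h2 : (zInt k q)^2 = |zInt k q|^2 := (sq_abs _).symm
  have h3 : |zInt k q|^2 ≤ (Real.sqrt 2 * Qz k q)^2 :=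
    pow_le_pow_left₀ (abs_nonneg _) h 2
  have h4 : (Real.sqrt 2 * Qz k q)^2 = 2 * (Qz k q)^2 := by
    rw [mul_pow, Real.sq_sqrt (by norm_num : (0:ℝ) ≤ 2)]
  rw [h2]
  rw [h4, Qz_sq] at h3
  exact h3

/-- the function `A(y)` controlling `sup_x (∫ f dz)²`. -/
def Af (L1 : ℝ) (f : Pt → ℝ) (y : ℝ) : ℝ :=
  (1/L1) * (∫ s in (0:ℝ)..L1, (zInt f (s, y))^2)
    + ∫ s in (0:ℝ)..L1, 4 * (Qz f (s, y) * Qz (pdx f) (s, y))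

lemma Af_nonneg {L1 : ℝ} (hL1 : 0 < L1) (f : Pt → ℝ) (y : ℝ) : 0 ≤ Af L1 f y := by
  refine add_nonneg (mul_nonneg (by positivity)
    (intervalIntegral.integral_nonneg hL1.le fun s _ => sq_nonneg _))
    (intervalIntegral.integral_nonneg hL1.le fun s _ => ?_)
  have := Qz_nonneg f (s, y); have := Qz_nonneg (pdx f) (s, y); positivity

lemma cont_Af {L1 : ℝ} {f : Pt → ℝ} (hf : ContDiff ℝ (⊤ : ℕ∞) f) : Continuous (Af L1 f) := by
  have c1 : Continuous (zInt f) := cont_zInt hf.continuous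
  have cQf : Continuous (Qz f) := cont_Qz hf.continuous
  have cQp : Continuous (Qz (pdx f)) := cont_Qz (cont_pdx hf)
  refine (continuous_const.mul (contParam (k := fun y s => (zInt f (s, y))^2) ?_ 0 L1)).add
    (contParam (k := fun y s => 4 * (Qz f (s, y) * Qz (pdx f) (s, y))) ?_ 0 L1)
  · exact ((c1.comp (continuous_snd.prodMk continuous_fst)).pow 2)
  · exact continuous_const.mul ((cQf.comp (continuous_snd.prodMk continuous_fst)).mul
      (cQp.comp (continuous_snd.prodMk continuous_fst)))

lemma F_sq_le_Af {L1 : ℝ} (hL1 : 0 < L1) {f : Pt → ℝ} (hf : ContDiff ℝ (⊤ : ℕ∞) f)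
    {x y : ℝ} (hx : x ∈ Icc 0 L1) :
    (zInt f (x, y))^2 ≤ Af L1 f y := by
  have cF : Continuous fun s => zInt f (s, y) :=
    (cont_zInt hf.continuous).comp (continuous_id.prodMk continuous_const)
  have cFx : Continuous fun s => zInt (pdx f) (s, y) :=
    (cont_zInt (cont_pdx hf)).comp (continuous_id.prodMk continuous_const)
  have hd : ∀ t, HasDerivAt (fun x => (zInt f (x, y))^2)
      (2 * zInt f (t, y) * zInt (pdx f) (t, y)) t := by
    intro t
    have h1 := (hasDerivAt_F hf y t).fun_mul (hasDerivAt_F hf y t)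
    have e : (fun x => zInt f (x, y) * zInt f (x, y)) = fun x => (zInt f (x, y))^2 := by
      funext s; ring
    rw [e] at h1
    exact h1.congr_deriv (by ring)
  have hc : Continuous fun t => 2 * zInt f (t, y) * zInt (pdx f) (t, y) :=
    (continuous_const.mul cF).mul cFx
  have hb := avg_bound hL1 hd hc hx
  refine hb.trans (add_le_add_right ?_ _)
  refine intervalIntegral.integral_mono_on hL1.le (hc.abs.intervalIntegrable 0 L1)
    ((continuous_const.mul ((cont_Qz hf.continuous).comp
        (continuous_id.prodMk continuous_const) |>.mul ((cont_Qz (cont_pdx hf)).comp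
        (continuous_id.prodMk continuous_const)))).intervalIntegrable 0 L1) ?_
  intro s _
  have e1 : |2 * zInt f (s, y) * zInt (pdx f) (s, y)|
      = 2 * (|zInt f (s, y)| * |zInt (pdx f) (s, y)|) := by
    rw [abs_mul, abs_mul]; simp [abs_of_nonneg]; ring
  rw [e1]
  have b1 := abs_zInt_le hf.continuous (q := (s, y))
  have b2 := abs_zInt_le (cont_pdx hf) (q := (s, y))
  have q1 := Qz_nonneg f (s, y); have q2 := Qz_nonneg (pdx f) (s, y)
  have s2 : (0:ℝ) ≤ Real.sqrt 2 := Real.sqrt_nonneg 2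
  have hs2 : Real.sqrt 2 * Real.sqrt 2 = 2 := Real.mul_self_sqrt (by norm_num)
  have key : (Real.sqrt 2 * Qz f (s, y)) * (Real.sqrt 2 * Qz (pdx f) (s, y))
      = (Real.sqrt 2 * Real.sqrt 2) * (Qz f (s, y) * Qz (pdx f) (s, y)) := by ring
  rw [hs2] at key
  have hmul := mul_le_mul b1 b2 (abs_nonneg _) (by positivity)
  rw [key] at hmul
  linarith

lemma contParamIoo {X : Type*} [TopologicalSpace X] {k : X → ℝ → ℝ}
    (hk : Continuous (Function.uncurry k)) (a b : ℝ) (hab : a ≤ b) :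
    Continuous fun x => ∫ t in Ioo a b, k x t := by
  have e : (fun x => ∫ t in Ioo a b, k x t) = fun x => ∫ t in a..b, k x t :=
    funext fun x => (ii_eq hab _).symm
  rw [e]; exact contParam hk a b

lemma int_Af_le {L1 L2 : ℝ} (hL1 : 0 < L1) (hL2 : 0 < L2) {f : Pt → ℝ} (hf : ContDiff ℝ (⊤ : ℕ∞) f) :
    ∫ y in Ioo 0 L2, Af L1 f y
      ≤ (2/L1) * intOn L1 L2 (fun p => (f p)^2)
        + 4 * (Real.sqrt (intOn L1 L2 (fun p => (f p)^2))
            * Real.sqrt (intOn L1 L2 (fun p => (pdx f p)^2))) := by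
  have hcf := hf.continuous
  have hcp := cont_pdx hf
  have cF : Continuous (zInt f) := cont_zInt hcf
  have cF2 : Continuous fun q : ℝ × ℝ => (zInt f q)^2 := cF.pow 2
  have cZ2 : Continuous (zInt (fun p => (f p)^2)) := cont_zInt (hcf.pow 2)
  have cZ2x : Continuous (zInt (fun p => (pdx f p)^2)) := cont_zInt (hcp.pow 2)
  have cQf : Continuous (Qz f) := cont_Qz hcf
  have cQp : Continuous (Qz (pdx f)) := cont_Qz hcp
  have cQQ : Continuous fun q : ℝ × ℝ => Qz f q * Qz (pdx f) q := cQf.mul cQp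
  have hswap : Continuous fun q : ℝ × ℝ => ((q.2, q.1) : ℝ × ℝ) :=
    continuous_snd.prodMk continuous_fst
  set I2 := intOn L1 L2 (fun p => (f p)^2) with hI2
  set Ix := intOn L1 L2 (fun p => (pdx f p)^2) with hIx
  -- identification of iterated integrals with intOn
  have e2 : (∫ s in Ioo 0 L1, ∫ y in Ioo 0 L2, zInt (fun p => (f p)^2) (s, y)) = I2 := by
    rw [hI2, intOn_eq (hcf.fun_pow 2)]
    exact setIntegral_congr_fun measurableSet_Ioo fun s _ =>
      setIntegral_congr_fun measurableSet_Ioo fun y _ => ii_eq (by norm_num) _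
  have e2x : (∫ s in Ioo 0 L1, ∫ y in Ioo 0 L2, zInt (fun p => (pdx f p)^2) (s, y)) = Ix := by
    rw [hIx, intOn_eq (hcp.fun_pow 2)]
    exact setIntegral_congr_fun measurableSet_Ioo fun s _ =>
      setIntegral_congr_fun measurableSet_Ioo fun y _ => ii_eq (by norm_num) _
  -- continuity of the two terms of Af
  have c_t1 : Continuous fun y => ∫ s in (0:ℝ)..L1, (zInt f (s, y))^2 :=
    contParam (k := fun y s => (zInt f (s, y))^2) (cF2.comp hswap) 0 L1
  have c_t2 : Continuous fun y => ∫ s in (0:ℝ)..L1, 4 * (Qz f (s, y) * Qz (pdx f) (s, y)) :=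
    contParam (k := fun y s => 4 * (Qz f (s, y) * Qz (pdx f) (s, y)))
      (continuous_const.fun_mul (cQQ.comp hswap)) 0 L1
  have hsplit : ∫ y in Ioo 0 L2, Af L1 f y
      = (1/L1) * (∫ y in Ioo 0 L2, ∫ s in (0:ℝ)..L1, (zInt f (s, y))^2)
        + ∫ y in Ioo 0 L2, ∫ s in (0:ℝ)..L1, 4 * (Qz f (s, y) * Qz (pdx f) (s, y)) := by
    rw [show (fun y => Af L1 f y) = fun y =>
        (1/L1) * (∫ s in (0:ℝ)..L1, (zInt f (s, y))^2)
          + ∫ s in (0:ℝ)..L1, 4 * (Qz f (s, y) * Qz (pdx f) (s, y)) from rfl]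
    rw [integral_add (intgIoo (continuous_const.fun_mul c_t1)) (intgIoo c_t2),
      integral_const_mul]
  -- Term 1
  have t1a : (∫ y in Ioo 0 L2, ∫ s in (0:ℝ)..L1, (zInt f (s, y))^2)
      = ∫ s in Ioo 0 L1, ∫ y in Ioo 0 L2, (zInt f (s, y))^2 := by
    rw [show (fun y => ∫ s in (0:ℝ)..L1, (zInt f (s, y))^2)
        = fun y => ∫ s in Ioo 0 L1, (zInt f (s, y))^2 from funext fun y => ii_eq hL1.le _]
    exact swap2 (Φ := fun q : ℝ × ℝ => (zInt f (q.2, q.1))^2) (cF2.comp hswap)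
  have t1b : (∫ s in Ioo 0 L1, ∫ y in Ioo 0 L2, (zInt f (s, y))^2)
      ≤ ∫ s in Ioo 0 L1, ∫ y in Ioo 0 L2, 2 * zInt (fun p => (f p)^2) (s, y) := by
    refine setIntegral_mono_on
      (intgIoo (contParamIoo (k := fun s y => (zInt f (s, y))^2)
        (by exact cF2) 0 L2 hL2.le))
      (intgIoo (contParamIoo (k := fun s y => 2 * zInt (fun p => (f p)^2) (s, y))
        (by exact continuous_const.mul cZ2) 0 L2 hL2.le))
      measurableSet_Ioo fun s _ => ?_
    refine setIntegral_mono_on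
      (intgIoo (cF2.comp (continuous_const.prodMk continuous_id)))
      (intgIoo ((continuous_const.mul cZ2).comp (continuous_const.prodMk continuous_id)))
      measurableSet_Ioo fun y _ => ?_
    exact sq_zInt_le hcf (s, y)
  have t1c : (∫ s in Ioo 0 L1, ∫ y in Ioo 0 L2, 2 * zInt (fun p => (f p)^2) (s, y))
      = 2 * I2 := by
    rw [show (fun s => ∫ y in Ioo 0 L2, 2 * zInt (fun p => (f p)^2) (s, y))
        = fun s => 2 * ∫ y in Ioo 0 L2, zInt (fun p => (f p)^2) (s, y) from
      funext fun s => integral_const_mul 2 _]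
    rw [integral_const_mul, e2]
  -- Term 2
  have t2a : (∫ y in Ioo 0 L2, ∫ s in (0:ℝ)..L1, 4 * (Qz f (s, y) * Qz (pdx f) (s, y)))
      = 4 * ∫ q in Ioo 0 L1 ×ˢ Ioo 0 L2, Qz f q * Qz (pdx f) q := by
    rw [show (fun y => ∫ s in (0:ℝ)..L1, 4 * (Qz f (s, y) * Qz (pdx f) (s, y)))
        = fun y => 4 * ∫ s in Ioo 0 L1, Qz f (s, y) * Qz (pdx f) (s, y) from
      funext fun y => by rw [ii_eq hL1.le, integral_const_mul]]
    rw [integral_const_mul]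
    congr 1
    rw [prod_eq_iter (Kb := Icc 0 L2) isCompact_Icc Ioo_subset_Icc_self cQQ]
    exact (swap2 (Φ := fun q : ℝ × ℝ => Qz f q * Qz (pdx f) q) cQQ).symm
  have t2b : (∫ q in Ioo 0 L1 ×ˢ Ioo 0 L2, Qz f q * Qz (pdx f) q)
      ≤ Real.sqrt (∫ q in Ioo 0 L1 ×ˢ Ioo 0 L2, (Qz f q)^2)
        * Real.sqrt (∫ q in Ioo 0 L1 ×ˢ Ioo 0 L2, (Qz (pdx f) q)^2) :=
    cs2 (K := Icc 0 L1 ×ˢ Icc 0 L2) (isCompact_Icc.prod isCompact_Icc)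
      (prod_mono Ioo_subset_Icc_self Ioo_subset_Icc_self)
      (measurableSet_Ioo.prod measurableSet_Ioo) cQf cQp
  have t2c : (∫ q in Ioo 0 L1 ×ˢ Ioo 0 L2, (Qz f q)^2) = I2 := by
    rw [show (fun q : ℝ × ℝ => (Qz f q)^2) = fun q => zInt (fun p => (f p)^2) q from
      funext fun q => Qz_sq q]
    rw [prod_eq_iter (Kb := Icc 0 L2) isCompact_Icc Ioo_subset_Icc_self cZ2]
    exact e2
  have t2cx : (∫ q in Ioo 0 L1 ×ˢ Ioo 0 L2, (Qz (pdx f) q)^2) = Ix := by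
    rw [show (fun q : ℝ × ℝ => (Qz (pdx f) q)^2) = fun q => zInt (fun p => (pdx f p)^2) q from
      funext fun q => Qz_sq q]
    rw [prod_eq_iter (Kb := Icc 0 L2) isCompact_Icc Ioo_subset_Icc_self cZ2x]
    exact e2x
  rw [hsplit]
  have hfinal1 : (1/L1) * (∫ y in Ioo 0 L2, ∫ s in (0:ℝ)..L1, (zInt f (s, y))^2)
      ≤ (2/L1) * I2 := by
    rw [t1a]
    have := t1b.trans_eq t1c
    calc (1/L1) * (∫ s in Ioo 0 L1, ∫ y in Ioo 0 L2, (zInt f (s, y))^2)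
        ≤ (1/L1) * (2 * I2) := by
          exact mul_le_mul_of_nonneg_left this (by positivity)
      _ = (2/L1) * I2 := by ring
  have hfinal2 : (∫ y in Ioo 0 L2, ∫ s in (0:ℝ)..L1, 4 * (Qz f (s, y) * Qz (pdx f) (s, y)))
      ≤ 4 * (Real.sqrt I2 * Real.sqrt Ix) := by
    rw [t2a]
    refine mul_le_mul_of_nonneg_left ?_ (by norm_num)
    exact t2b.trans_eq (by rw [t2c, t2cx])
  exact add_le_add hfinal1 hfinal2

lemma int_Gh_le {L1 L2 : ℝ} (hL1 : 0 < L1) (hL2 : 0 < L2) {h : Pt → ℝ}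
    (hh : ContDiff ℝ (⊤ : ℕ∞) h) {y : ℝ} (hy : y ∈ Icc 0 L2) :
    ∫ x in Ioo 0 L1, zInt (fun p => (h p)^2) (x, y)
      ≤ (1/L2) * intOn L1 L2 (fun p => (h p)^2)
        + 2 * (Real.sqrt (intOn L1 L2 (fun p => (h p)^2))
            * Real.sqrt (intOn L1 L2 (fun p => (pdy h p)^2))) := by
  have hch := hh.continuous
  have hcp := cont_pdy hh
  have cAbs : Continuous fun p : Pt => |2 * h p * pdy h p| :=
    ((continuous_const.mul hch).mul hcp).abs
  -- pointwise averaged-FTC bound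
  have ptwise : ∀ x z : ℝ, (h (x, y, z))^2
      ≤ (1/L2) * (∫ t in (0:ℝ)..L2, (h (x, t, z))^2)
        + ∫ t in (0:ℝ)..L2, |2 * h (x, t, z) * pdy h (x, t, z)| := by
    intro x z
    have c3 : Continuous fun t : ℝ => ((x, t, z) : Pt) :=
      continuous_const.prodMk (continuous_id.prodMk continuous_const)
    have hd : ∀ t, HasDerivAt (fun t => (h (x, t, z))^2)
        (2 * h (x, t, z) * pdy h (x, t, z)) t := by
      intro t
      have h1 := (hasDerivAt_pdy hh x t z).fun_mul (hasDerivAt_pdy hh x t z)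
      have e : (fun s => h (x, s, z) * h (x, s, z)) = fun s => (h (x, s, z))^2 := by
        funext s; ring
      rw [e] at h1
      exact h1.congr_deriv (by ring)
    have hc : Continuous fun t => 2 * h (x, t, z) * pdy h (x, t, z) :=
      (continuous_const.mul (hch.comp c3)).mul (hcp.comp c3)
    exact avg_bound hL2 hd hc hy
  -- continuity helpers (functions of (x, z) and slices)
  have cXZ : Continuous fun w : ℝ × ℝ => ((w.1, y, w.2) : Pt) :=
    continuous_fst.prodMk (continuous_const.prodMk continuous_snd)
  -- step A : integrate in z at fixed x
  have stepA : ∀ x : ℝ, zInt (fun p => (h p)^2) (x, y)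
      ≤ (1/L2) * (∫ t in Ioo 0 L2, ∫ z in Ioo (-1:ℝ) 1, (h (x, t, z))^2)
        + ∫ t in Ioo 0 L2, ∫ z in Ioo (-1:ℝ) 1, |2 * h (x, t, z) * pdy h (x, t, z)| := by
    intro x
    have cXmap : Continuous fun w : ℝ × ℝ => ((x, w.2, w.1) : Pt) :=
      continuous_const.prodMk (continuous_snd.prodMk continuous_fst)
    have cT1 : Continuous fun z : ℝ => ∫ t in (0:ℝ)..L2, (h (x, t, z))^2 :=
      contParam (k := fun z t => (h (x, t, z))^2) (((hch.comp cXmap)).fun_pow 2) 0 L2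
    have cT2 : Continuous fun z : ℝ => ∫ t in (0:ℝ)..L2, |2 * h (x, t, z) * pdy h (x, t, z)| :=
      contParam (k := fun z t => |2 * h (x, t, z) * pdy h (x, t, z)|)
        (cAbs.comp cXmap) 0 L2
    have hmono : ∫ z in Ioo (-1:ℝ) 1, (h (x, y, z))^2
        ≤ ∫ z in Ioo (-1:ℝ) 1, ((1/L2) * (∫ t in (0:ℝ)..L2, (h (x, t, z))^2)
            + ∫ t in (0:ℝ)..L2, |2 * h (x, t, z) * pdy h (x, t, z)|) := by
      refine setIntegral_mono_on
        (intgIoo ((hch.comp (continuous_const.prodMk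
          (continuous_const.prodMk continuous_id))).pow 2))
        (intgIoo ((continuous_const.mul cT1).add cT2)) measurableSet_Ioo
        fun z _ => ptwise x z
    have e0 : zInt (fun p => (h p)^2) (x, y) = ∫ z in Ioo (-1:ℝ) 1, (h (x, y, z))^2 :=
      ii_eq (by norm_num) _
    rw [e0]
    refine hmono.trans_eq ?_
    rw [integral_add (intgIoo (continuous_const.fun_mul cT1)) (intgIoo cT2), integral_const_mul]
    congr 1
    · congr 1
      -- ∫ z Ioo, ∫ t 0..L2 → ∫ t Ioo, ∫ z Ioo
      rw [show (fun z => ∫ t in (0:ℝ)..L2, (h (x, t, z))^2)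
          = fun z => ∫ t in Ioo 0 L2, (h (x, t, z))^2 from
        funext fun z => ii_eq hL2.le _]
      exact swap2 (Φ := fun w : ℝ × ℝ => (h (x, w.2, w.1))^2) ((hch.comp cXmap).pow 2)
    · rw [show (fun z => ∫ t in (0:ℝ)..L2, |2 * h (x, t, z) * pdy h (x, t, z)|)
          = fun z => ∫ t in Ioo 0 L2, |2 * h (x, t, z) * pdy h (x, t, z)| from
        funext fun z => ii_eq hL2.le _]
      exact swap2 (Φ := fun w : ℝ × ℝ => |2 * h (x, w.2, w.1) * pdy h (x, w.2, w.1)|)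
        (cAbs.comp cXmap)
  -- continuity in x of the right-hand side pieces
  have cR1 : Continuous fun x : ℝ => ∫ t in Ioo 0 L2, ∫ z in Ioo (-1:ℝ) 1, (h (x, t, z))^2 := by
    refine contParamIoo (k := fun x t => ∫ z in Ioo (-1:ℝ) 1, (h (x, t, z))^2) ?_ 0 L2 hL2.le
    refine contParamIoo (k := fun w : ℝ × ℝ => fun z => (h (w.1, w.2, z))^2) ?_ (-1) 1
      (by norm_num)
    exact (hch.comp ((continuous_fst.comp continuous_fst).prodMk
      ((continuous_snd.comp continuous_fst).prodMk continuous_snd))).pow 2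
  have cR2 : Continuous fun x : ℝ =>
      ∫ t in Ioo 0 L2, ∫ z in Ioo (-1:ℝ) 1, |2 * h (x, t, z) * pdy h (x, t, z)| := by
    refine contParamIoo (k := fun x t => ∫ z in Ioo (-1:ℝ) 1, |2 * h (x, t, z) * pdy h (x, t, z)|)
      ?_ 0 L2 hL2.le
    refine contParamIoo (k := fun w : ℝ × ℝ => fun z => |2 * h (w.1, w.2, z) * pdy h (w.1, w.2, z)|)
      ?_ (-1) 1 (by norm_num)
    exact cAbs.comp ((continuous_fst.comp continuous_fst).prodMk
      ((continuous_snd.comp continuous_fst).prodMk continuous_snd))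
  -- step B : integrate in x
  have stepB : ∫ x in Ioo 0 L1, zInt (fun p => (h p)^2) (x, y)
      ≤ (1/L2) * intOn L1 L2 (fun p => (h p)^2)
        + intOn L1 L2 (fun p => |2 * h p * pdy h p|) := by
    have hmono : ∫ x in Ioo 0 L1, zInt (fun p => (h p)^2) (x, y)
        ≤ ∫ x in Ioo 0 L1, ((1/L2) * (∫ t in Ioo 0 L2, ∫ z in Ioo (-1:ℝ) 1, (h (x, t, z))^2)
            + ∫ t in Ioo 0 L2, ∫ z in Ioo (-1:ℝ) 1, |2 * h (x, t, z) * pdy h (x, t, z)|) := by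
      refine setIntegral_mono_on
        (intgIoo ((cont_zInt (hch.pow 2)).comp (continuous_id.prodMk continuous_const)))
        (intgIoo ((continuous_const.mul cR1).add cR2)) measurableSet_Ioo
        fun x _ => stepA x
    refine hmono.trans_eq ?_
    rw [integral_add (intgIoo (continuous_const.fun_mul cR1)) (intgIoo cR2), integral_const_mul]
    congr 1
    · congr 1
      rw [intOn_eq (hch.fun_pow 2)]
    · rw [intOn_eq cAbs]
  -- step C : Cauchy-Schwarz on Ω
  have stepC : intOn L1 L2 (fun p => |2 * h p * pdy h p|)
      ≤ 2 * (Real.sqrt (intOn L1 L2 (fun p => (h p)^2))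
          * Real.sqrt (intOn L1 L2 (fun p => (pdy h p)^2))) := by
    have hOm : MeasurableSet (OmegaSet L1 L2) :=
      (measurableSet_Ioo.prod (measurableSet_Ioo.prod measurableSet_Ioo))
    have hKom : IsCompact ((Icc 0 L1 ×ˢ (Icc 0 L2 ×ˢ Icc (-1:ℝ) 1)) : Set Pt) :=
      isCompact_Icc.prod (isCompact_Icc.prod isCompact_Icc)
    have hsub : OmegaSet L1 L2 ⊆ Icc 0 L1 ×ˢ (Icc 0 L2 ×ˢ Icc (-1:ℝ) 1) :=
      prod_mono Ioo_subset_Icc_self (prod_mono Ioo_subset_Icc_self Ioo_subset_Icc_self)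
    have e1 : intOn L1 L2 (fun p => |2 * h p * pdy h p|)
        = ∫ p in OmegaSet L1 L2, (2 * |h p|) * |pdy h p| := by
      rw [intOn]
      refine setIntegral_congr_fun hOm fun p _ => ?_
      rw [abs_mul, abs_mul, abs_two]
    rw [e1]
    have hcs := cs2 (K := Icc 0 L1 ×ˢ (Icc 0 L2 ×ˢ Icc (-1:ℝ) 1)) hKom hsub hOm
      (u := fun p => 2 * |h p|) (v := fun p => |pdy h p|)
      (continuous_const.mul hch.abs) hcp.abs
    refine hcs.trans ?_
    have e2 : (∫ p in OmegaSet L1 L2, (2 * |h p|)^2)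
        = 4 * intOn L1 L2 (fun p => (h p)^2) := by
      rw [intOn, ← integral_const_mul]
      refine setIntegral_congr_fun hOm fun p _ => ?_
      rw [mul_pow, sq_abs]; norm_num
    have e3 : (∫ p in OmegaSet L1 L2, (|pdy h p|)^2) = intOn L1 L2 (fun p => (pdy h p)^2) := by
      rw [intOn]
      exact setIntegral_congr_fun hOm fun p _ => sq_abs _
    rw [e2, e3]
    have hnn : 0 ≤ intOn L1 L2 (fun p => (h p)^2) := by
      rw [intOn]; exact setIntegral_nonneg hOm fun p _ => sq_nonneg _
    rw [show (4:ℝ) * intOn L1 L2 (fun p => (h p)^2)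
        = (2:ℝ)^2 * intOn L1 L2 (fun p => (h p)^2) by norm_num,
      Real.sqrt_mul (by positivity) _, Real.sqrt_sq (by norm_num : (0:ℝ) ≤ 2)]
    rw [mul_assoc]
  exact stepB.trans (add_le_add_right stepC _)

lemma sqrt_combo {c1 c2 N P : ℝ} (hc1 : 0 ≤ c1) (hc2 : 0 ≤ c2) (hN : 0 ≤ N) (hP : 0 ≤ P) :
    Real.sqrt (c1^2 * N^2 + c2^2 * (N * P))
      ≤ (c1 + c2) * (Real.sqrt N * (Real.sqrt N + Real.sqrt P)) := by
  have h1 : Real.sqrt (c1^2 * N^2 + c2^2 * (N * P))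
      ≤ Real.sqrt (c1^2 * N^2) + Real.sqrt (c2^2 * (N * P)) :=
    sqrt_add_le' (by positivity) (by positivity)
  have e1 : Real.sqrt (c1^2 * N^2) = c1 * N := by
    rw [Real.sqrt_mul (by positivity), Real.sqrt_sq hc1, Real.sqrt_sq hN]
  have e2 : Real.sqrt (c2^2 * (N * P)) = c2 * (Real.sqrt N * Real.sqrt P) := by
    rw [Real.sqrt_mul (by positivity), Real.sqrt_sq hc2, Real.sqrt_mul hN]
  rw [e1, e2] at h1
  refine h1.trans ?_
  have hsN := Real.sqrt_nonneg N
  have hsP := Real.sqrt_nonneg P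
  have hNe : N = Real.sqrt N * Real.sqrt N := (Real.mul_self_sqrt hN).symm
  nlinarith [mul_nonneg hc1 (mul_nonneg hsN hsP), mul_nonneg hc2 (mul_nonneg hsN hsN),
    mul_nonneg (mul_nonneg hc1 hsN) hsP, mul_nonneg (mul_nonneg hc2 hsN) hsN]

theorem stmt_0' (L1 L2 : ℝ) (hL1 : 0 < L1) (hL2 : 0 < L2) :
    ∃ C > 0, ∀ f g h : Pt → ℝ,
      ContDiff ℝ (⊤ : ℕ∞) f → ContDiff ℝ (⊤ : ℕ∞) g → ContDiff ℝ (⊤ : ℕ∞) h →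
      Periodic3 L1 L2 f → Periodic3 L1 L2 g → Periodic3 L1 L2 h →
      (∫ q in MSet L1 L2,
          (∫ z in (-1:ℝ)..1, f (q.1, q.2, z)) *
          (∫ z in (-1:ℝ)..1, g (q.1, q.2, z) * h (q.1, q.2, z)))
        ≤ C * Real.sqrt (L2n L1 L2 f)
            * (Real.sqrt (L2n L1 L2 f) + Real.sqrt (L2gradH L1 L2 f))
            * L2n L1 L2 g
            * Real.sqrt (L2n L1 L2 h)
            * (Real.sqrt (L2n L1 L2 h) + Real.sqrt (L2gradH L1 L2 h)) := by
  refine ⟨(Real.sqrt (2/L1) + 2) * (Real.sqrt (1/L2) + Real.sqrt 2), by positivity,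
    fun f g h hf hg hh _ _ _ => ?_⟩
  have hcf := hf.continuous
  have hcg := hg.continuous
  have hch := hh.continuous
  have hOm : MeasurableSet (OmegaSet L1 L2) :=
    (measurableSet_Ioo.prod (measurableSet_Ioo.prod measurableSet_Ioo))
  -- basic quantities
  set I2f := intOn L1 L2 (fun p => (f p)^2) with hI2f
  set Ixf := intOn L1 L2 (fun p => (pdx f p)^2) with hIxf
  set I2g := intOn L1 L2 (fun p => (g p)^2) with hI2g
  set I2h := intOn L1 L2 (fun p => (h p)^2) with hI2h
  set Iyh := intOn L1 L2 (fun p => (pdy h p)^2) with hIyh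
  have hI2f0 : 0 ≤ I2f := setIntegral_nonneg hOm fun p _ => sq_nonneg _
  have hIxf0 : 0 ≤ Ixf := setIntegral_nonneg hOm fun p _ => sq_nonneg _
  have hI2g0 : 0 ≤ I2g := setIntegral_nonneg hOm fun p _ => sq_nonneg _
  have hI2h0 : 0 ≤ I2h := setIntegral_nonneg hOm fun p _ => sq_nonneg _
  have hIyh0 : 0 ≤ Iyh := setIntegral_nonneg hOm fun p _ => sq_nonneg _
  set Bh := (1/L2) * I2h + 2 * (Real.sqrt I2h * Real.sqrt Iyh) with hBh
  have hBh0 : 0 ≤ Bh := by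
    have : (0:ℝ) ≤ 1/L2 := by positivity
    positivity
  set Caf := (2/L1) * I2f + 4 * (Real.sqrt I2f * Real.sqrt Ixf) with hCaf
  have hCaf0 : 0 ≤ Caf := by
    have : (0:ℝ) ≤ 2/L1 := by positivity
    positivity
  -- continuity of the building blocks
  have cF : Continuous (zInt f) := cont_zInt hcf
  have cGgh : Continuous (zInt (fun p => g p * h p)) := cont_zInt (hcg.mul hch)
  have cGg : Continuous (zInt (fun p => (g p)^2)) := cont_zInt (hcg.pow 2)
  have cGh : Continuous (zInt (fun p => (h p)^2)) := cont_zInt (hch.pow 2)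
  have cQg : Continuous (Qz g) := cont_Qz hcg
  have cQh : Continuous (Qz h) := cont_Qz hch
  -- rewrite LHS as iterated integral, y outermost
  have lhs_eq : (∫ q in MSet L1 L2,
      (∫ z in (-1:ℝ)..1, f (q.1, q.2, z)) *
      (∫ z in (-1:ℝ)..1, g (q.1, q.2, z) * h (q.1, q.2, z)))
      = ∫ y in Ioo 0 L2, ∫ x in Ioo 0 L1, zInt f (x, y) * zInt (fun p => g p * h p) (x, y) := by
    rw [show (fun q : ℝ × ℝ => (∫ z in (-1:ℝ)..1, f (q.1, q.2, z)) *
        (∫ z in (-1:ℝ)..1, g (q.1, q.2, z) * h (q.1, q.2, z)))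
        = fun q => zInt f q * zInt (fun p => g p * h p) q from rfl]
    rw [mset_eq (cF.fun_mul cGgh)]
    exact swap2 (cF.fun_mul cGgh)
  -- the inner (fixed y) estimate
  have inner : ∀ y ∈ Ioo (0:ℝ) L2,
      ∫ x in Ioo 0 L1, zInt f (x, y) * zInt (fun p => g p * h p) (x, y)
        ≤ Real.sqrt (Af L1 f y) *
            (Real.sqrt (∫ x in Ioo 0 L1, zInt (fun p => (g p)^2) (x, y)) * Real.sqrt Bh) := by
    intro y hy
    have hyI : y ∈ Icc (0:ℝ) L2 := Ioo_subset_Icc_self hy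
    have hAf0 : 0 ≤ Af L1 f y := Af_nonneg hL1 f y
    -- step i+ii
    have step1 : ∫ x in Ioo 0 L1, zInt f (x, y) * zInt (fun p => g p * h p) (x, y)
        ≤ Real.sqrt (Af L1 f y) * ∫ x in Ioo 0 L1, Qz g (x, y) * Qz h (x, y) := by
      rw [← integral_const_mul]
      refine setIntegral_mono_on
        (intgIoo ((cF.mul cGgh).comp (continuous_id.prodMk continuous_const)))
        (intgIoo ((continuous_const.mul ((cQg.mul cQh).comp
          (continuous_id.prodMk continuous_const)))))
        measurableSet_Ioo fun x hx => ?_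
      have habs : zInt f (x, y) * zInt (fun p => g p * h p) (x, y)
          ≤ |zInt f (x, y)| * |zInt (fun p => g p * h p) (x, y)| := by
        calc zInt f (x, y) * zInt (fun p => g p * h p) (x, y)
            ≤ |zInt f (x, y) * zInt (fun p => g p * h p) (x, y)| := le_abs_self _
          _ = _ := abs_mul _ _
      have hF : |zInt f (x, y)| ≤ Real.sqrt (Af L1 f y) := by
        rw [← Real.sqrt_sq_eq_abs]
        exact Real.sqrt_le_sqrt (F_sq_le_Af hL1 hf (Ioo_subset_Icc_self hx))
      have hGgh : |zInt (fun p => g p * h p) (x, y)| ≤ Qz g (x, y) * Qz h (x, y) :=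
        abs_zInt_mul_le hcg hch (x, y)
      calc zInt f (x, y) * zInt (fun p => g p * h p) (x, y)
          ≤ |zInt f (x, y)| * |zInt (fun p => g p * h p) (x, y)| := habs
        _ ≤ Real.sqrt (Af L1 f y) * (Qz g (x, y) * Qz h (x, y)) :=
            mul_le_mul hF hGgh (abs_nonneg _) (Real.sqrt_nonneg _)
    -- step iii+iv
    have step2 : ∫ x in Ioo 0 L1, Qz g (x, y) * Qz h (x, y)
        ≤ Real.sqrt (∫ x in Ioo 0 L1, zInt (fun p => (g p)^2) (x, y)) * Real.sqrt Bh := by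
      have hcs := cs2 (α := ℝ) (K := Icc 0 L1) isCompact_Icc Ioo_subset_Icc_self
        measurableSet_Ioo (u := fun x => Qz g (x, y)) (v := fun x => Qz h (x, y))
        (cQg.comp (continuous_id.prodMk continuous_const))
        (cQh.comp (continuous_id.prodMk continuous_const))
      have eg : (∫ x in Ioo 0 L1, (Qz g (x, y))^2)
          = ∫ x in Ioo 0 L1, zInt (fun p => (g p)^2) (x, y) :=
        setIntegral_congr_fun measurableSet_Ioo fun x _ => Qz_sq _
      have eh : (∫ x in Ioo 0 L1, (Qz h (x, y))^2)
          = ∫ x in Ioo 0 L1, zInt (fun p => (h p)^2) (x, y) :=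
        setIntegral_congr_fun measurableSet_Ioo fun x _ => Qz_sq _
      rw [eg, eh] at hcs
      refine hcs.trans ?_
      refine mul_le_mul_of_nonneg_left ?_ (Real.sqrt_nonneg _)
      exact Real.sqrt_le_sqrt (int_Gh_le hL1 hL2 hh hyI)
    calc ∫ x in Ioo 0 L1, zInt f (x, y) * zInt (fun p => g p * h p) (x, y)
        ≤ Real.sqrt (Af L1 f y) * ∫ x in Ioo 0 L1, Qz g (x, y) * Qz h (x, y) := step1
      _ ≤ Real.sqrt (Af L1 f y) *
            (Real.sqrt (∫ x in Ioo 0 L1, zInt (fun p => (g p)^2) (x, y)) * Real.sqrt Bh) :=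
          mul_le_mul_of_nonneg_left step2 (Real.sqrt_nonneg _)
  -- continuity in y of various terms
  have cInner : Continuous fun y => ∫ x in Ioo 0 L1, zInt f (x, y) * zInt (fun p => g p * h p) (x, y) := by
    refine contParamIoo (k := fun y x => zInt f (x, y) * zInt (fun p => g p * h p) (x, y)) ?_ 0 L1 hL1.le
    exact (cF.mul cGgh).comp (continuous_snd.prodMk continuous_fst)
  have cG2 : Continuous fun y => ∫ x in Ioo 0 L1, zInt (fun p => (g p)^2) (x, y) := by
    refine contParamIoo (k := fun y x => zInt (fun p => (g p)^2) (x, y)) ?_ 0 L1 hL1.le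
    exact cGg.comp (continuous_snd.prodMk continuous_fst)
  have hG20 : ∀ y, 0 ≤ ∫ x in Ioo 0 L1, zInt (fun p => (g p)^2) (x, y) :=
    fun y => setIntegral_nonneg measurableSet_Ioo fun x _ => zInt_sq_nonneg g (x, y)
  -- integrate the inner bound in y
  have outer : (∫ y in Ioo 0 L2, ∫ x in Ioo 0 L1, zInt f (x, y) * zInt (fun p => g p * h p) (x, y))
      ≤ Real.sqrt Bh * ∫ y in Ioo 0 L2,
          Real.sqrt (Af L1 f y) * Real.sqrt (∫ x in Ioo 0 L1, zInt (fun p => (g p)^2) (x, y)) := by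
    rw [← integral_const_mul]
    refine setIntegral_mono_on (intgIoo cInner)
      (intgIoo (continuous_const.mul (((cont_Af hf).sqrt).mul cG2.sqrt))) measurableSet_Ioo
      fun y hy => ?_
    refine (inner y hy).trans_eq ?_
    ring
  -- Cauchy-Schwarz in y
  have ycs : (∫ y in Ioo 0 L2,
        Real.sqrt (Af L1 f y) * Real.sqrt (∫ x in Ioo 0 L1, zInt (fun p => (g p)^2) (x, y)))
      ≤ Real.sqrt (∫ y in Ioo 0 L2, Af L1 f y) * Real.sqrt I2g := by
    have hcs := cs2 (α := ℝ) (K := Icc 0 L2) isCompact_Icc Ioo_subset_Icc_self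
      measurableSet_Ioo (u := fun y => Real.sqrt (Af L1 f y))
      (v := fun y => Real.sqrt (∫ x in Ioo 0 L1, zInt (fun p => (g p)^2) (x, y)))
      (cont_Af hf).sqrt cG2.sqrt
    have e1 : (∫ y in Ioo 0 L2, (Real.sqrt (Af L1 f y))^2) = ∫ y in Ioo 0 L2, Af L1 f y :=
      setIntegral_congr_fun measurableSet_Ioo fun y _ => Real.sq_sqrt (Af_nonneg hL1 f y)
    have e2 : (∫ y in Ioo 0 L2,
        (Real.sqrt (∫ x in Ioo 0 L1, zInt (fun p => (g p)^2) (x, y)))^2) = I2g := by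
      rw [show (fun y => (Real.sqrt (∫ x in Ioo 0 L1, zInt (fun p => (g p)^2) (x, y)))^2)
          = fun y => ∫ x in Ioo 0 L1, zInt (fun p => (g p)^2) (x, y) from
        funext fun y => Real.sq_sqrt (hG20 y)]
      rw [show (∫ y in Ioo 0 L2, ∫ x in Ioo 0 L1, zInt (fun p => (g p)^2) (x, y))
          = ∫ x in Ioo 0 L1, ∫ y in Ioo 0 L2, zInt (fun p => (g p)^2) (x, y) from
        (swap2 cGg).symm]
      rw [hI2g, intOn_eq (hcg.fun_pow 2)]
      exact setIntegral_congr_fun measurableSet_Ioo fun x _ =>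
        setIntegral_congr_fun measurableSet_Ioo fun y _ => ii_eq (by norm_num) _
    rw [e1, e2] at hcs
    exact hcs
  -- bound ∫ Af
  have hAfint : Real.sqrt (∫ y in Ioo 0 L2, Af L1 f y) ≤ Real.sqrt Caf :=
    Real.sqrt_le_sqrt (int_Af_le hL1 hL2 hf)
  -- put the chain together
  have main : (∫ q in MSet L1 L2,
      (∫ z in (-1:ℝ)..1, f (q.1, q.2, z)) *
      (∫ z in (-1:ℝ)..1, g (q.1, q.2, z) * h (q.1, q.2, z)))
      ≤ Real.sqrt Bh * (Real.sqrt Caf * Real.sqrt I2g) := by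
    rw [lhs_eq]
    refine outer.trans ?_
    have h2 : (∫ y in Ioo 0 L2,
        Real.sqrt (Af L1 f y) * Real.sqrt (∫ x in Ioo 0 L1, zInt (fun p => (g p)^2) (x, y)))
        ≤ Real.sqrt Caf * Real.sqrt I2g := by
      refine ycs.trans ?_
      exact mul_le_mul_of_nonneg_right hAfint (Real.sqrt_nonneg _)
    exact mul_le_mul_of_nonneg_left h2 (Real.sqrt_nonneg _)
  -- identification with the L² norms
  have hNf : L2n L1 L2 f = Real.sqrt I2f := rfl
  have hNg : L2n L1 L2 g = Real.sqrt I2g := rfl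
  have hNh : L2n L1 L2 h = Real.sqrt I2h := rfl
  have hGradf : Real.sqrt Ixf ≤ L2gradH L1 L2 f := by
    refine Real.sqrt_le_sqrt ?_
    rw [hIxf, intOn, intOn]
    have hKom : IsCompact ((Icc 0 L1 ×ˢ (Icc 0 L2 ×ˢ Icc (-1:ℝ) 1)) : Set Pt) :=
      isCompact_Icc.prod (isCompact_Icc.prod isCompact_Icc)
    have hsub : OmegaSet L1 L2 ⊆ Icc 0 L1 ×ˢ (Icc 0 L2 ×ˢ Icc (-1:ℝ) 1) :=
      prod_mono Ioo_subset_Icc_self (prod_mono Ioo_subset_Icc_self Ioo_subset_Icc_self)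
    refine setIntegral_mono_on (intg hKom hsub ((cont_pdx hf).pow 2))
      (intg hKom hsub (((cont_pdx hf).pow 2).add ((cont_pdy hf).pow 2))) hOm
      fun p _ => by simp [gradHSq]; positivity
  have hGradh : Real.sqrt Iyh ≤ L2gradH L1 L2 h := by
    refine Real.sqrt_le_sqrt ?_
    rw [hIyh, intOn, intOn]
    have hKom : IsCompact ((Icc 0 L1 ×ˢ (Icc 0 L2 ×ˢ Icc (-1:ℝ) 1)) : Set Pt) :=
      isCompact_Icc.prod (isCompact_Icc.prod isCompact_Icc)
    have hsub : OmegaSet L1 L2 ⊆ Icc 0 L1 ×ˢ (Icc 0 L2 ×ˢ Icc (-1:ℝ) 1) :=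
      prod_mono Ioo_subset_Icc_self (prod_mono Ioo_subset_Icc_self Ioo_subset_Icc_self)
    refine setIntegral_mono_on (intg hKom hsub ((cont_pdy hh).pow 2))
      (intg hKom hsub (((cont_pdx hh).pow 2).add ((cont_pdy hh).pow 2))) hOm
      fun p _ => by simp [gradHSq]; positivity
  -- final numeric estimates
  have hNf0 : 0 ≤ L2n L1 L2 f := Real.sqrt_nonneg _
  have hNh0 : 0 ≤ L2n L1 L2 h := Real.sqrt_nonneg _
  have hGf0 : 0 ≤ L2gradH L1 L2 f := Real.sqrt_nonneg _
  have hGh0 : 0 ≤ L2gradH L1 L2 h := Real.sqrt_nonneg _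
  have bCaf : Real.sqrt Caf
      ≤ (Real.sqrt (2/L1) + 2) * (Real.sqrt (L2n L1 L2 f)
          * (Real.sqrt (L2n L1 L2 f) + Real.sqrt (L2gradH L1 L2 f))) := by
    have e : Caf = (Real.sqrt (2/L1))^2 * (L2n L1 L2 f)^2
        + 2^2 * (L2n L1 L2 f * Real.sqrt Ixf) := by
      rw [hNf, Real.sq_sqrt (by positivity : (0:ℝ) ≤ 2/L1), Real.sq_sqrt hI2f0, hCaf]
      norm_num
    rw [e]
    refine (sqrt_combo (Real.sqrt_nonneg _) (by norm_num) hNf0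
      (Real.sqrt_nonneg Ixf)).trans ?_
    refine mul_le_mul_of_nonneg_left ?_ (by positivity)
    refine mul_le_mul_of_nonneg_left ?_ (Real.sqrt_nonneg _)
    exact add_le_add_right (Real.sqrt_le_sqrt hGradf) _
  have bBh : Real.sqrt Bh
      ≤ (Real.sqrt (1/L2) + Real.sqrt 2) * (Real.sqrt (L2n L1 L2 h)
          * (Real.sqrt (L2n L1 L2 h) + Real.sqrt (L2gradH L1 L2 h))) := by
    have e : Bh = (Real.sqrt (1/L2))^2 * (L2n L1 L2 h)^2
        + (Real.sqrt 2)^2 * (L2n L1 L2 h * Real.sqrt Iyh) := by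
      rw [hNh, Real.sq_sqrt (by positivity : (0:ℝ) ≤ 1/L2), Real.sq_sqrt hI2h0,
        Real.sq_sqrt (by norm_num : (0:ℝ) ≤ 2), hBh]
    rw [e]
    refine (sqrt_combo (Real.sqrt_nonneg _) (Real.sqrt_nonneg _) hNh0
      (Real.sqrt_nonneg Iyh)).trans ?_
    refine mul_le_mul_of_nonneg_left ?_ (by positivity)
    refine mul_le_mul_of_nonneg_left ?_ (Real.sqrt_nonneg _)
    exact add_le_add_right (Real.sqrt_le_sqrt hGradh) _
  refine main.trans ?_
  rw [hNg]
  have hfac0 : 0 ≤ Real.sqrt Caf * Real.sqrt I2g :=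
    mul_nonneg (Real.sqrt_nonneg _) (Real.sqrt_nonneg _)
  calc Real.sqrt Bh * (Real.sqrt Caf * Real.sqrt I2g)
      ≤ ((Real.sqrt (1/L2) + Real.sqrt 2) * (Real.sqrt (L2n L1 L2 h)
          * (Real.sqrt (L2n L1 L2 h) + Real.sqrt (L2gradH L1 L2 h))))
        * (Real.sqrt Caf * Real.sqrt I2g) := mul_le_mul_of_nonneg_right bBh hfac0
    _ ≤ ((Real.sqrt (1/L2) + Real.sqrt 2) * (Real.sqrt (L2n L1 L2 h)
          * (Real.sqrt (L2n L1 L2 h) + Real.sqrt (L2gradH L1 L2 h))))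
        * (((Real.sqrt (2/L1) + 2) * (Real.sqrt (L2n L1 L2 f)
          * (Real.sqrt (L2n L1 L2 f) + Real.sqrt (L2gradH L1 L2 f)))) * Real.sqrt I2g) := by
        refine mul_le_mul_of_nonneg_left ?_ (by positivity)
        exact mul_le_mul_of_nonneg_right bCaf (Real.sqrt_nonneg _)
    _ = (Real.sqrt (2/L1) + 2) * (Real.sqrt (1/L2) + Real.sqrt 2)
          * Real.sqrt (L2n L1 L2 f) * (Real.sqrt (L2n L1 L2 f) + Real.sqrt (L2gradH L1 L2 f))
          * Real.sqrt I2g * Real.sqrt (L2n L1 L2 h)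
          * (Real.sqrt (L2n L1 L2 h) + Real.sqrt (L2gradH L1 L2 h)) := by ring

/-- Cao–Titi anisotropic Ladyzhenskaya-type inequality, first form. -/
theorem stmt_0 (L1 L2 : ℝ) (hL1 : 0 < L1) (hL2 : 0 < L2) :
    ∃ C > 0, ∀ f g h : Pt → ℝ,
      ContDiff ℝ (⊤ : ℕ∞) f → ContDiff ℝ (⊤ : ℕ∞) g → ContDiff ℝ (⊤ : ℕ∞) h →
      Periodic3 L1 L2 f → Periodic3 L1 L2 g → Periodic3 L1 L2 h →
      (∫ q in MSet L1 L2,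
          (∫ z in (-1:ℝ)..1, f (q.1, q.2, z)) *
          (∫ z in (-1:ℝ)..1, g (q.1, q.2, z) * h (q.1, q.2, z)))
        ≤ C * Real.sqrt (L2n L1 L2 f)
            * (Real.sqrt (L2n L1 L2 f) + Real.sqrt (L2gradH L1 L2 f))
            * L2n L1 L2 g
            * Real.sqrt (L2n L1 L2 h)
            * (Real.sqrt (L2n L1 L2 h) + Real.sqrt (L2gradH L1 L2 h)) := by
  exact stmt_0' L1 L2 hL1 hL2
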